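/- arXiv:1002.3798 — 5 statements merged into one kernel-verified Lean document; each statement's English description precedes it below -/
import Mathlib

section
/- Let λ > 0, d > 0, f(t) = λ θ(t−d) e^{−λ(t−d)}, and let R(t) = Σ_{k=1}^{∞} f^{⋆k}(t) (a locally finite sum, since f^{⋆k}(t) = 0 for t < kd). Then for all t ≥ 0, ∫_{t-d}^{t} R(s+d) ds + λ^{−1} R(t+d) = 1. -/
/-- Convolution of two real functions: `(u ⋆ v)(t) = ∫_ℝ u(s) v(t-s) ds`. -/
noncomputable def conv (u v : ℝ → ℝ) : ℝ → ℝ := fun t => ∫ s : ℝ, u s * v (t - s)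

/-- Convolution powers: `convPow f n = f^{⋆(n+1)}`, i.e. `convPow f 0 = f`. -/
noncomputable def convPow (f : ℝ → ℝ) : ℕ → ℝ → ℝ
  | 0 => f
  | n + 1 => conv (convPow f n) f

/-!
The `(n+1)`-fold convolution power of `f` is the Erlang density of shape `n + 1`, delayed by
`(n + 1) d`, so on `(-∞, t + d]` the renewal density is a finite sum of delayed Erlang densities.
With `S_k(y) = P(E₁ + ⋯ + E_k > y)` for i.i.d. exponential `E_i` of rate `λ`, the shape-`(k+1)`
density integrates to differences of `S_{k+1}` and `λ⁻¹` times it is `S_{k+1} - S_k`. Hence the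
`n`-th summand of the left-hand side is `D (n + 1) - D n` with `D k = S_k(t - k d)`, and the sum
telescopes to `S_N(t - N d) - S_0(t) = 1 - 0` once `N d > t`.
-/

open Nat Finset MeasureTheory

/-- Density of the sum of `n + 1` (not `n`) independent exponential variables of rate `lam`. -/
noncomputable def erlangPDF (lam : ℝ) (n : ℕ) (y : ℝ) : ℝ :=
  if 0 ≤ y then lam ^ (n + 1) * y ^ n * Real.exp (-lam * y) / n ! else 0

/-- `P(E₁ + ⋯ + E_k > y)` for `k` independent exponential variables of rate `lam`; for `k = 0`
it is the survival function of the Dirac mass at `0`. -/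
noncomputable def erlangSurvival (lam : ℝ) (k : ℕ) (y : ℝ) : ℝ :=
  if 0 ≤ y then Real.exp (-lam * y) * ∑ j ∈ range k, (lam * y) ^ j / j ! else 1

section Convolution

theorem conv_comp_sub (u v : ℝ → ℝ) (a b t : ℝ) :
    conv (fun x => u (x - a)) (fun x => v (x - b)) t = conv u v (t - (a + b)) := by
  unfold conv
  rw [← integral_add_right_eq_self _ a]
  congr 1 with s
  ring_nf

theorem erlangPDF_mul_erlangPDF_zero (lam : ℝ) (n : ℕ) (t s : ℝ) :
    erlangPDF lam n s * erlangPDF lam 0 (t - s) =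
      (Set.Icc 0 t).indicator
        (fun s => lam ^ (n + 2) * Real.exp (-lam * t) / n ! * s ^ n) s := by
  by_cases hs : 0 ≤ s
  · by_cases hts : s ≤ t
    · have hexp : Real.exp (-lam * s) * Real.exp (-lam * (t - s)) = Real.exp (-lam * t) := by
        rw [← Real.exp_add]; ring_nf
      simp only [erlangPDF, if_pos hs, if_pos (sub_nonneg.mpr hts),
        Set.indicator_of_mem (Set.mem_Icc.mpr ⟨hs, hts⟩), ← hexp]
      ring
    · simp [erlangPDF, hts]
  · simp [erlangPDF, hs]

theorem conv_erlangPDF_erlangPDF_zero (lam : ℝ) (n : ℕ) :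
    conv (erlangPDF lam n) (erlangPDF lam 0) = erlangPDF lam (n + 1) := by
  funext t
  simp only [conv, erlangPDF_mul_erlangPDF_zero, integral_indicator measurableSet_Icc]
  by_cases ht : 0 ≤ t
  · rw [integral_Icc_eq_integral_Ioc, ← intervalIntegral.integral_of_le ht,
      intervalIntegral.integral_const_mul, integral_pow, erlangPDF, if_pos ht]
    push_cast [factorial_succ]
    field_simp
    ring
  · simp [erlangPDF, ht]

theorem convPow_eq_erlangPDF {lam d : ℝ} {f : ℝ → ℝ}
    (hf : ∀ t, f t = if d ≤ t then lam * Real.exp (-lam * (t - d)) else 0) (n : ℕ) :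
    convPow f n = fun t => erlangPDF lam n (t - (n + 1) * d) := by
  induction n with
  | zero =>
    funext t
    simp [convPow, hf, erlangPDF]
  | succ n ih =>
    have hf' : f = fun t => erlangPDF lam 0 (t - d) := by
      funext t
      simp [hf, erlangPDF]
    funext t
    rw [convPow, ih, hf', conv_comp_sub, conv_erlangPDF_erlangPDF_zero]
    push_cast
    ring_nf

end Convolution

section Survival

theorem inv_mul_erlangPDF {lam : ℝ} (hlam : lam ≠ 0) (n : ℕ) (y : ℝ) :
    lam⁻¹ * erlangPDF lam n y = erlangSurvival lam (n + 1) y - erlangSurvival lam n y := by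
  by_cases hy : 0 ≤ y
  · simp only [erlangPDF, erlangSurvival, if_pos hy, sum_range_succ]
    field_simp
    ring
  · simp [erlangPDF, erlangSurvival, hy]

variable (lam : ℝ)

theorem erlangSurvival_of_neg (k : ℕ) {y : ℝ} (hy : y < 0) : erlangSurvival lam k y = 1 :=
  if_neg hy.not_ge

theorem erlangSurvival_zero_of_nonneg {y : ℝ} (hy : 0 ≤ y) : erlangSurvival lam 0 y = 0 := by
  simp [erlangSurvival, hy]

theorem hasDerivAt_exp_mul_sum_range (n : ℕ) (y : ℝ) :
    HasDerivAt (fun y => Real.exp (-lam * y) * ∑ j ∈ range (n + 1), (lam * y) ^ j / j !)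
      (-(lam ^ (n + 1) * y ^ n * Real.exp (-lam * y) / n !)) y := by
  have hexp : HasDerivAt (fun y => Real.exp (-lam * y)) (Real.exp (-lam * y) * -lam) y := by
    simpa using ((hasDerivAt_id y).const_mul (-lam)).exp
  induction n with
  | zero => simpa [mul_comm] using hexp
  | succ n ih =>
    have hpow : HasDerivAt (fun y => (lam * y) ^ (n + 1) / (n + 1)!)
        ((n + 1 : ℕ) * (lam * y) ^ n * lam / (n + 1)!) y := by
      simpa using (((hasDerivAt_id y).const_mul lam).pow (n + 1)).div_const ((n + 1)! : ℝ)
    have hsplit : (fun y => Real.exp (-lam * y) * ∑ j ∈ range (n + 2), (lam * y) ^ j / j !) =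
        fun y => Real.exp (-lam * y) * ∑ j ∈ range (n + 1), (lam * y) ^ j / j ! +
          Real.exp (-lam * y) * ((lam * y) ^ (n + 1) / (n + 1)!) := by
      funext y
      rw [sum_range_succ _ (n + 1), mul_add]
    rw [hsplit]
    refine (ih.add (hexp.mul hpow)).congr_deriv ?_
    push_cast [factorial_succ]
    field_simp
    ring

theorem continuous_erlangSurvival_succ (n : ℕ) : Continuous (erlangSurvival lam (n + 1)) := by
  refine Continuous.if_le (by fun_prop) continuous_const continuous_const continuous_id ?_
  rintro y rfl
  simp [sum_range_succ']

theorem hasDerivAt_erlangSurvival_succ (n : ℕ) {y : ℝ} (hy : y ≠ 0) :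
    HasDerivAt (erlangSurvival lam (n + 1)) (-erlangPDF lam n y) y := by
  rcases hy.lt_or_gt with hy | hy
  · have hconst : erlangSurvival lam (n + 1) =ᶠ[nhds y] fun _ => 1 :=
      Filter.eventually_of_mem (Iio_mem_nhds hy) fun z hz => erlangSurvival_of_neg lam _ hz
    simpa [erlangPDF, hy.not_ge] using (hasDerivAt_const y (1 : ℝ)).congr_of_eventuallyEq hconst
  · have hsmooth : erlangSurvival lam (n + 1) =ᶠ[nhds y]
        fun y => Real.exp (-lam * y) * ∑ j ∈ range (n + 1), (lam * y) ^ j / j ! :=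
      Filter.eventually_of_mem (Ioi_mem_nhds hy) fun z hz => if_pos (le_of_lt hz)
    simpa [erlangPDF, hy.le] using
      (hasDerivAt_exp_mul_sum_range lam n y).congr_of_eventuallyEq hsmooth

theorem intervalIntegrable_erlangPDF_comp_sub (n : ℕ) (c a b : ℝ) :
    IntervalIntegrable (fun y => erlangPDF lam n (y - c)) volume a b := by
  have hind : (fun y => erlangPDF lam n (y - c)) = (Set.Ici c).indicator
      fun y => lam ^ (n + 1) * (y - c) ^ n * Real.exp (-lam * (y - c)) / n ! := by
    funext y
    simp [erlangPDF, Set.indicator_apply]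
  rw [hind, intervalIntegrable_iff]
  exact (Continuous.integrableOn_uIoc (by fun_prop)).indicator measurableSet_Ici

theorem integral_erlangPDF (n : ℕ) (a b : ℝ) :
    ∫ y in a..b, erlangPDF lam n y =
      erlangSurvival lam (n + 1) a - erlangSurvival lam (n + 1) b := by
  have hFTC := integral_eq_of_hasDerivAt_off_countable (-erlangSurvival lam (n + 1))
    (erlangPDF lam n) (Set.countable_singleton 0)
    (continuous_erlangSurvival_succ lam n).neg.continuousOn
    (fun y hy => by simpa using (hasDerivAt_erlangSurvival_succ lam n hy.2).neg)
    (by simpa using intervalIntegrable_erlangPDF_comp_sub lam n 0 a b)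
  rw [hFTC, Pi.neg_apply, Pi.neg_apply]
  ring

end Survival

theorem integral_erlangPDF_add_inv_mul {lam : ℝ} (hlam : lam ≠ 0) (n : ℕ) (c d t : ℝ) :
    (∫ s in (t - d)..t, erlangPDF lam n (s - c)) + lam⁻¹ * erlangPDF lam n (t - c) =
      erlangSurvival lam (n + 1) (t - d - c) - erlangSurvival lam n (t - c) := by
  rw [intervalIntegral.integral_comp_sub_right (erlangPDF lam n), integral_erlangPDF,
    inv_mul_erlangPDF hlam]
  ring

theorem tsum_erlangPDF_eq_sum (lam : ℝ) {d u : ℝ} (hd : 0 ≤ d) {N : ℕ}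
    (hu : u < (N + 1) * d) :
    ∑' n : ℕ, erlangPDF lam n (u - (n + 1) * d) =
      ∑ n ∈ range N, erlangPDF lam n (u - (n + 1) * d) := by
  refine tsum_eq_sum fun n hn => if_neg ?_
  have hNn : (N : ℝ) ≤ n := by exact_mod_cast not_lt.mp (mem_range.not.mp hn)
  nlinarith

/-- with `f(t) = lam·θ(t-d)·e^{-lam(t-d)}` and the renewal density
`R(t) = Σ_{k≥1} f^{⋆k}(t)`, for all `t ≥ 0` one has
`∫_{t-d}^t R(s+d) ds + lam⁻¹ R(t+d) = 1`. -/
theorem stmt_2 (lam d : ℝ) (hlam : 0 < lam) (hd : 0 < d)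
    (f R : ℝ → ℝ)
    (hf : ∀ t : ℝ, f t = if d ≤ t then lam * Real.exp (-lam * (t - d)) else 0)
    (hR : ∀ t : ℝ, R t = ∑' n : ℕ, convPow f n t) :
    ∀ t : ℝ, 0 ≤ t → (∫ s in (t - d)..t, R (s + d)) + lam⁻¹ * R (t + d) = 1 := by
  intro t ht
  obtain ⟨N, hN⟩ : ∃ N : ℕ, t < N * d := by
    obtain ⟨N, hN⟩ := exists_nat_gt (t / d)
    exact ⟨N, (div_lt_iff₀ hd).mp hN⟩
  have hRsum : ∀ s ≤ t, R (s + d) = ∑ n ∈ range N, erlangPDF lam n (s - n * d) := by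
    intro s hs
    simp only [hR, convPow_eq_erlangPDF hf]
    rw [tsum_erlangPDF_eq_sum lam hd.le (by linarith)]
    exact sum_congr rfl fun n _ => by ring_nf
  let D : ℕ → ℝ := fun k => erlangSurvival lam k (t - k * d)
  calc (∫ s in (t - d)..t, R (s + d)) + lam⁻¹ * R (t + d)
      = ∑ n ∈ range N, ((∫ s in (t - d)..t, erlangPDF lam n (s - n * d)) +
          lam⁻¹ * erlangPDF lam n (t - n * d)) := by
        rw [intervalIntegral.integral_congr fun s hs => hRsum s ?_, hRsum t le_rfl,
          intervalIntegral.integral_finsetSum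
            fun n _ => intervalIntegrable_erlangPDF_comp_sub lam n _ _ _,
          mul_sum, sum_add_distrib]
        rw [Set.uIcc_of_le (by linarith)] at hs
        exact hs.2
    _ = ∑ n ∈ range N, (D (n + 1) - D n) := by
        refine sum_congr rfl fun n _ => ?_
        rw [integral_erlangPDF_add_inv_mul hlam.ne']
        simp only [D]
        push_cast
        ring_nf
    _ = 1 := by
        rw [sum_range_sub]
        simp only [D, CharP.cast_eq_zero, zero_mul, sub_zero]
        rw [erlangSurvival_of_neg lam N (by linarith), erlangSurvival_zero_of_nonneg lam ht,
          sub_zero]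
end

section
/- Let λ > 0, d > 0, f(t) = λ θ(t−d) e^{−λ(t−d)}, R(t) = Σ_{k=1}^{∞} f^{⋆k}(t), and define g(t) = λ^{−1} R(t+d) for t ∈ ℝ (so g(t) = 0 for t < 0 and g(0) = 1 as right limit of e^{−λt}). Then for every t > 0 that is not an integer multiple of d, g is differentiable at t and g'(t) = λ g(t−d) − λ g(t). -/
/-!
The `(n+1)`-fold convolution of `f` is the Erlang density of shape `n + 1` delayed by `(n+1)d`,
so `g x = ∑_{n d ≤ x} P_n (x - n d)` with the Poisson weights `P_n y = (λ y)ⁿ / n! · e^{-λ y}`.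
On each interval `(N d, (N+1) d)` this is the finite sum over `n ≤ N`, and
`P_0' = -λ P_0`, `P_{n+1}' = λ P_n - λ P_{n+1}` turn its derivative into
`λ ∑_{n < N} P_n (t - d - n d) - λ ∑_{n ≤ N} P_n (t - n d) = λ g (t - d) - λ g t`.
-/

open MeasureTheory Set Real

noncomputable def poissonProb (lam : ℝ) (n : ℕ) (x : ℝ) : ℝ :=
  (lam * x) ^ n / n.factorial * exp (-(lam * x))

lemma hasDerivAt_poissonProb_zero (lam x : ℝ) :
    HasDerivAt (poissonProb lam 0) (-lam * poissonProb lam 0 x) x := by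
  have hzero : poissonProb lam 0 = fun y => exp (-(lam * y)) := by
    funext y
    simp [poissonProb]
  rw [hzero]
  simpa [mul_comm] using (((hasDerivAt_id x).const_mul lam).fun_neg).exp

lemma hasDerivAt_poissonProb_succ (lam x : ℝ) (n : ℕ) :
    HasDerivAt (poissonProb lam (n + 1))
      (lam * poissonProb lam n x - lam * poissonProb lam (n + 1) x) x := by
  have hlin : HasDerivAt (fun y => lam * y) lam x := by
    simpa using (hasDerivAt_id x).const_mul lam
  have h := ((hlin.fun_pow (n + 1)).div_const ((n + 1).factorial : ℝ)).fun_mul hlin.fun_neg.exp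
  refine h.congr_deriv ?_
  simp only [poissonProb, Nat.factorial_succ, Nat.cast_mul, Nat.add_sub_cancel]
  push_cast
  field_simp
  ring

-- Shape `n + 1`, rate `lam`, delay `a`; thus `f = delayedErlangPDF lam 0 d`.
noncomputable def delayedErlangPDF (lam : ℝ) (n : ℕ) (a t : ℝ) : ℝ :=
  if a ≤ t then lam * poissonProb lam n (t - a) else 0

lemma conv_delayedErlangPDF (lam a b : ℝ) (n : ℕ) :
    conv (delayedErlangPDF lam n a) (delayedErlangPDF lam 0 b) =
      delayedErlangPDF lam (n + 1) (a + b) := by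
  funext t
  set C := lam ^ (n + 2) / n.factorial * exp (-(lam * (t - (a + b))))
  have hintegrand : (fun s => delayedErlangPDF lam n a s * delayedErlangPDF lam 0 b (t - s)) =
      (Icc a (t - b)).indicator (fun s => C * (s - a) ^ n) := by
    funext s
    by_cases hs : s ∈ Icc a (t - b)
    · rw [indicator_of_mem hs, delayedErlangPDF, delayedErlangPDF, if_pos hs.1,
        if_pos (by linarith [hs.2])]
      simp only [poissonProb, C, pow_zero, Nat.factorial_zero, Nat.cast_one, div_one, one_mul]
      rw [show -(lam * (t - (a + b))) = -(lam * (s - a)) + -(lam * (t - s - b)) by ring, exp_add,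
        mul_pow]
      ring
    · rw [indicator_of_notMem hs]
      have hout : ¬(a ≤ s ∧ b ≤ t - s) := fun h => hs ⟨h.1, by linarith [h.2]⟩
      unfold delayedErlangPDF
      split_ifs <;> simp_all
  rw [conv, hintegrand, integral_indicator measurableSet_Icc, delayedErlangPDF]
  rcases le_or_gt (a + b) t with h | h
  · rw [integral_Icc_eq_integral_Ioc, ← intervalIntegral.integral_of_le (by linarith),
      intervalIntegral.integral_const_mul, intervalIntegral.integral_comp_sub_right (· ^ n),
      integral_pow, if_pos h, poissonProb]
    simp only [C, Nat.factorial_succ, Nat.cast_mul, mul_pow]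
    push_cast
    field_simp
    ring
  · rw [Icc_eq_empty (by linarith), Measure.restrict_empty, integral_zero_measure,
      if_neg (not_le.2 h)]

lemma convPow_delayedErlangPDF (lam d : ℝ) (n : ℕ) :
    convPow (delayedErlangPDF lam 0 d) n = delayedErlangPDF lam n ((n + 1) * d) := by
  induction n with
  | zero => simp [convPow]
  | succ n ih =>
    rw [convPow, ih, conv_delayedErlangPDF]
    push_cast
    ring_nf

lemma inv_mul_delayedErlangPDF_add {lam : ℝ} (hlam : lam ≠ 0) (d x : ℝ) (n : ℕ) :
    lam⁻¹ * delayedErlangPDF lam n ((n + 1) * d) (x + d) =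
      if n * d ≤ x then poissonProb lam n (x - n * d) else 0 := by
  have hshift : x + d - (n + 1) * d = x - n * d := by ring
  simp only [delayedErlangPDF, hshift, show ((n : ℝ) + 1) * d ≤ x + d ↔ n * d ≤ x by
    constructor <;> intro h <;> linarith]
  split_ifs
  · field_simp
  · rw [mul_zero]

noncomputable def fundamentalSolution (lam d x : ℝ) : ℝ :=
  ∑' n : ℕ, if n * d ≤ x then poissonProb lam n (x - n * d) else 0

noncomputable def fundamentalSolutionPartial (lam d : ℝ) (N : ℕ) (x : ℝ) : ℝ :=
  ∑ n ∈ Finset.range N, poissonProb lam n (x - n * d)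

lemma fundamentalSolution_eq_partial (lam : ℝ) {d x : ℝ} (hd : 0 < d) {N : ℕ}
    (hNx : (N - 1) * d ≤ x) (hxN : x < N * d) :
    fundamentalSolution lam d x = fundamentalSolutionPartial lam d N x := by
  rw [fundamentalSolution, tsum_eq_sum (s := Finset.range N)]
  · refine Finset.sum_congr rfl fun n hn => if_pos ?_
    have hnN : (n : ℝ) + 1 ≤ N := by exact_mod_cast Finset.mem_range.1 hn
    nlinarith
  · intro n hn
    have hNn : (N : ℝ) ≤ n := by exact_mod_cast not_lt.1 (Finset.mem_range.not.1 hn)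
    exact if_neg fun h => by nlinarith

lemma hasDerivAt_fundamentalSolutionPartial (lam d : ℝ) (N : ℕ) (t : ℝ) :
    HasDerivAt (fundamentalSolutionPartial lam d (N + 1))
      (lam * fundamentalSolutionPartial lam d N (t - d) -
        lam * fundamentalSolutionPartial lam d (N + 1) t) t := by
  induction N with
  | zero =>
    have hone : fundamentalSolutionPartial lam d 1 = poissonProb lam 0 := by
      funext x
      simp [fundamentalSolutionPartial]
    rw [hone]
    simpa [fundamentalSolutionPartial] using hasDerivAt_poissonProb_zero lam t
  | succ N ih =>
    have hsucc : fundamentalSolutionPartial lam d (N + 1 + 1) =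
        fun x => fundamentalSolutionPartial lam d (N + 1) x +
          poissonProb lam (N + 1) (x - (N + 1) * d) := by
      funext x
      simp [fundamentalSolutionPartial, Finset.sum_range_succ]
    have hlast := (hasDerivAt_poissonProb_succ lam (t - (N + 1) * d) N).comp_sub_const t
      ((N + 1) * d)
    rw [hsucc]
    refine (ih.fun_add hlast).congr_deriv ?_
    simp only [fundamentalSolutionPartial, Finset.sum_range_succ,
      show t - d - N * d = t - (N + 1) * d by ring]
    ring

lemma exists_nat_mul_lt_lt {d t : ℝ} (hd : 0 < d) (ht : 0 < t) (hne : ∀ n : ℕ, t ≠ n * d) :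
    ∃ N : ℕ, N * d < t ∧ t < (N + 1) * d := by
  refine ⟨⌊t / d⌋₊, lt_of_le_of_ne ?_ (hne _).symm, ?_⟩
  · exact (le_div_iff₀ hd).1 (Nat.floor_le (by positivity))
  · exact (div_lt_iff₀ hd).1 (Nat.lt_floor_add_one _)

lemma hasDerivAt_fundamentalSolution (lam : ℝ) {d t : ℝ} (hd : 0 < d) {N : ℕ}
    (hNt : N * d < t) (htN : t < (N + 1) * d) :
    HasDerivAt (fundamentalSolution lam d)
      (lam * fundamentalSolution lam d (t - d) - lam * fundamentalSolution lam d t) t := by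
  have heq : ∀ x ∈ Ioo ((N : ℝ) * d) ((N + 1) * d),
      fundamentalSolution lam d x = fundamentalSolutionPartial lam d (N + 1) x :=
    fun x hx => fundamentalSolution_eq_partial lam hd (by push_cast; linarith [hx.1])
      (by push_cast; exact hx.2)
  rw [heq t ⟨hNt, htN⟩, fundamentalSolution_eq_partial lam hd (by linarith) (by linarith)]
  exact (hasDerivAt_fundamentalSolutionPartial lam d N t).congr_of_eventuallyEq
    (Filter.eventuallyEq_of_mem (Ioo_mem_nhds hNt htN) heq)

/-- with `f(t) = lam·θ(t-d)·e^{-lam(t-d)}`, `R(t) = Σ_{k≥1} f^{⋆k}(t)` and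
`g(t) = lam⁻¹ R(t+d)`, the fundamental solution `g` satisfies the delay differential
equation `g'(t) = lam·g(t-d) - lam·g(t)` at every `t > 0` which is not an integer
multiple of `d`. -/
theorem stmt_3 (lam d : ℝ) (hlam : 0 < lam) (hd : 0 < d)
    (f R g : ℝ → ℝ)
    (hf : ∀ t : ℝ, f t = if d ≤ t then lam * Real.exp (-lam * (t - d)) else 0)
    (hR : ∀ t : ℝ, R t = ∑' n : ℕ, convPow f n t)
    (hg : ∀ t : ℝ, g t = lam⁻¹ * R (t + d)) :
    ∀ t : ℝ, 0 < t → (∀ n : ℕ, t ≠ (n : ℝ) * d) →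
      HasDerivAt g (lam * g (t - d) - lam * g t) t := by
  have hf' : f = delayedErlangPDF lam 0 d := by
    funext t
    simp [hf, delayedErlangPDF, poissonProb]
  have hg' : g = fundamentalSolution lam d := by
    funext x
    rw [hg, hR, ← tsum_mul_left, fundamentalSolution, hf']
    simp only [convPow_delayedErlangPDF, inv_mul_delayedErlangPDF_add hlam.ne']
  intro t ht hne
  obtain ⟨N, hNt, htN⟩ := exists_nat_mul_lt_lt hd ht hne
  rw [hg']
  exact hasDerivAt_fundamentalSolution lam hd hNt htN
end

section
/- Let λ > 0, d > 0, f(t) = λ θ(t−d) e^{−λ(t−d)}, and let A : ℝ → ℝ be continuous and bounded. If A(t) = ∫_0^∞ f(s) A(t−s) ds for all t ≥ d, then A is differentiable on (d, ∞) and A'(t) = λ A(t−d) − λ A(t) for all t > d. -/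
/-!
Put `g x = ∫_{-∞}^x e^{λu} A(u) du`. Since `f` vanishes before the dead time, the substitution
`u = t - s` turns the invariance equation into `A t = λ e^{-λ(t-d)} g(t-d)` for `t ≥ d`.
The right-hand side is differentiable because `g' x = e^{λx} A x` by the fundamental theorem of
calculus, and the product rule gives `A' t = λ A(t-d) - λ A t`.
-/

open MeasureTheory Set Real

theorem hasDerivAt_integral_Iic {E : Type*} [NormedAddCommGroup E] [NormedSpace ℝ E]
    [CompleteSpace E] {h : ℝ → E} (hh : Continuous h) (hint : ∀ x, IntegrableOn h (Iic x))
    (x : ℝ) : HasDerivAt (fun y => ∫ u in Iic y, h u) (h x) x := by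
  have hFTC : HasDerivAt (fun y => ∫ u in (x - 1)..y, h u) (h x) x :=
    intervalIntegral.integral_hasDerivAt_right (hh.intervalIntegrable _ _)
      (hh.stronglyMeasurableAtFilter _ _) hh.continuousAt
  refine (hFTC.const_add (∫ u in Iic (x - 1), h u)).congr_of_eventuallyEq
    (Filter.Eventually.of_forall fun y => ?_)
  dsimp only
  rw [← intervalIntegral.integral_Iic_sub_Iic (hint _) (hint _), add_sub_cancel]

/-- The inter-event interval density of the Poisson process with rate `lam` and dead time `d`. -/
noncomputable def ppdDensity (lam d t : ℝ) : ℝ :=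
  if d ≤ t then lam * exp (-lam * (t - d)) else 0

section ppdDensity

variable {lam d : ℝ}

theorem ppdDensity_of_lt {t : ℝ} (ht : t < d) : ppdDensity lam d t = 0 :=
  if_neg ht.not_ge

theorem ppdDensity_sub_mul (A : ℝ → ℝ) (t u : ℝ) :
    ppdDensity lam d (t - u) * A u =
      (Iic (t - d)).indicator (fun u => lam * exp (-lam * (t - d)) * (exp (lam * u) * A u)) u := by
  by_cases hu : u ∈ Iic (t - d)
  · rw [mem_Iic] at hu
    have hexp : exp (-lam * (t - u - d)) = exp (-lam * (t - d)) * exp (lam * u) := by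
      rw [← exp_add]; ring_nf
    rw [indicator_of_mem (mem_Iic.2 hu), ppdDensity, if_pos (by linarith), hexp]
    ring
  · rw [indicator_of_notMem hu, ppdDensity_of_lt (by rw [mem_Iic] at hu; linarith), zero_mul]

theorem setIntegral_Ioi_ppdDensity_mul (hd : 0 < d) (A : ℝ → ℝ) (t : ℝ) :
    ∫ s in Ioi 0, ppdDensity lam d s * A (t - s) =
      lam * exp (-lam * (t - d)) * ∫ u in Iic (t - d), exp (lam * u) * A u := by
  have hsupport : ∫ s in Ioi 0, ppdDensity lam d s * A (t - s) =
      ∫ s, ppdDensity lam d s * A (t - s) := by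
    refine setIntegral_eq_integral_of_forall_compl_eq_zero fun s hs => ?_
    rw [ppdDensity_of_lt (by simp only [mem_Ioi, not_lt] at hs; linarith), zero_mul]
  have hsubst : ∫ s, ppdDensity lam d s * A (t - s) = ∫ u, ppdDensity lam d (t - u) * A u := by
    simpa only [sub_sub_cancel] using
      (integral_sub_left_eq_self (fun s => ppdDensity lam d s * A (t - s)) volume t).symm
  simp_rw [hsupport, hsubst, ppdDensity_sub_mul A t]
  rw [integral_indicator measurableSet_Iic, integral_const_mul]

end ppdDensity

theorem hasDerivAt_exp_mul_comp_sub {lam d a t : ℝ} {g : ℝ → ℝ}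
    (hg : HasDerivAt g (exp (lam * (t - d)) * a) (t - d)) :
    HasDerivAt (fun y => lam * exp (-lam * (y - d)) * g (y - d))
      (lam * a - lam * (lam * exp (-lam * (t - d)) * g (t - d))) t := by
  have hexp : HasDerivAt (fun y => exp (-lam * (y - d))) (exp (-lam * (t - d)) * -lam) t := by
    simpa using (((hasDerivAt_id t).sub_const d).const_mul (-lam)).exp
  have hshift : HasDerivAt (fun y => g (y - d)) (exp (lam * (t - d)) * a) t := by
    simpa using hg.comp_sub_const t d
  have hinv : exp (-lam * (t - d)) * exp (lam * (t - d)) = 1 := by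
    rw [← exp_add]; ring_nf; exact exp_zero
  have hprod := (hexp.mul hshift).const_mul lam
  simp only [Pi.mul_apply, ← mul_assoc] at hprod
  refine hprod.congr_deriv ?_
  linear_combination lam * a * hinv

/-- with `f(t) = lam·θ(t-d)·e^{-lam(t-d)}`, if a continuous bounded
function `A` satisfies the convolution invariance `A(t) = ∫_0^∞ f(s) A(t-s) ds` for
all `t ≥ d`, then `A` is differentiable on `(d, ∞)` with
`A'(t) = lam·A(t-d) - lam·A(t)` there. -/
theorem stmt_5 (lam d : ℝ) (hlam : 0 < lam) (hd : 0 < d)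
    (f A : ℝ → ℝ)
    (hf : ∀ t : ℝ, f t = if d ≤ t then lam * Real.exp (-lam * (t - d)) else 0)
    (hA : Continuous A) (hAb : ∃ C : ℝ, ∀ t : ℝ, |A t| ≤ C)
    (hconv : ∀ t : ℝ, d ≤ t → A t = ∫ s in Set.Ioi (0 : ℝ), f s * A (t - s)) :
    ∀ t : ℝ, d < t → HasDerivAt A (lam * A (t - d) - lam * A t) t := by
  obtain ⟨C, hC⟩ := hAb
  obtain rfl : f = ppdDensity lam d := funext hf
  set g : ℝ → ℝ := fun x => ∫ u in Iic x, exp (lam * u) * A u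
  have hg : ∀ x, HasDerivAt g (exp (lam * x) * A x) x :=
    hasDerivAt_integral_Iic (by fun_prop) fun x =>
      (integrableOn_exp_mul_Iic hlam x).mul_bdd hA.aestronglyMeasurable (ae_of_all _ hC)
  have hrepr : ∀ t, d ≤ t → A t = lam * exp (-lam * (t - d)) * g (t - d) := fun t ht =>
    (hconv t ht).trans (setIntegral_Ioi_ppdDensity_mul hd A t)
  intro t ht
  have hderiv := hasDerivAt_exp_mul_comp_sub (hg (t - d))
  rw [← hrepr t ht.le] at hderiv
  exact hderiv.congr_of_eventuallyEq
    ((eventually_gt_nhds ht).mono fun y hy => hrepr y hy.le)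
end

section
/- Let λ₀ ≥ ε ≥ 0, d > 0, and let n be a positive integer. Define λ(t) = λ₀ + ε cos(2πnt/d) and the constant function A(t) = (1 + λ₀ d)^{−1}. Then 1 = ∫_{t-d}^{t} λ(s)A(s) ds + A(t) for all t ∈ ℝ; consequently the output rate ν(t) = λ(t)A(t) = λ(t)/(1 + λ₀ d) is proportional to the input rate. -/
/-!
At the resonant frequencies `n / d` the window `[t - d, t]` covers exactly `n` periods of the
modulation, so the cosine integrates to zero over it and the input mass in every window is
`lam₀ d`. A constant active fraction `A` then turns the normalization condition into
`1 = lam₀ d A + A`, which `A = (1 + lam₀ d)⁻¹` solves.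
-/

open Real

theorem integral_cos_two_pi_mul_nat_mul_div_eq_zero {n : ℕ} (hn : n ≠ 0) {d : ℝ} (hd : d ≠ 0)
    (t : ℝ) : ∫ s in (t - d)..t, cos (2 * π * n * s / d) = 0 := by
  have hc : 2 * π * n / d ≠ 0 := by positivity
  have hshift : 2 * π * n / d * (t - d) = 2 * π * n / d * t - n * (2 * π) := by
    field_simp
  simp_rw [mul_div_right_comm (2 * π * n)]
  rw [intervalIntegral.integral_comp_mul_left (fun x => cos x) hc, integral_cos, hshift,
    sin_sub_nat_mul_two_pi, sub_self, smul_zero]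

theorem integral_const_add_mul_cos_eq {n : ℕ} (hn : n ≠ 0) {d : ℝ} (hd : d ≠ 0)
    (lam0 ε t : ℝ) :
    ∫ s in (t - d)..t, (lam0 + ε * cos (2 * π * n * s / d)) = lam0 * d := by
  have hcos : Continuous fun s : ℝ => ε * cos (2 * π * n * s / d) := by fun_prop
  rw [intervalIntegral.integral_add intervalIntegrable_const (hcos.intervalIntegrable _ _),
    intervalIntegral.integral_const_mul, integral_cos_two_pi_mul_nat_mul_div_eq_zero hn hd,
    intervalIntegral.integral_const, smul_eq_mul]
  ring

theorem one_eq_integral_mul_const_add_const {lam : ℝ → ℝ} {lam0 d t : ℝ}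
    (hmass : ∫ s in (t - d)..t, lam s = lam0 * d) (hpos : 1 + lam0 * d ≠ 0) :
    1 = (∫ s in (t - d)..t, lam s * (1 + lam0 * d)⁻¹) + (1 + lam0 * d)⁻¹ := by
  rw [intervalIntegral.integral_mul_const, hmass]
  field_simp
  ring

/-- for the cosine-modulated input `lam(t) = lam₀ + ε cos(2πn t/d)`
whose frequency `n/d` is an integer multiple of the inverse dead-time, the constant
active fraction `A(t) = (1 + lam₀ d)⁻¹` satisfies the normalization condition
`1 = ∫_{t-d}^t lam(s)A(s) ds + A(t)`, and consequently the output rate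
`ν(t) = lam(t)A(t) = lam(t)/(1 + lam₀ d)` is proportional to the input rate. -/
theorem stmt_9 (lam0 ε d : ℝ) (hε : 0 ≤ ε) (hlam0 : ε ≤ lam0) (hd : 0 < d)
    (n : ℕ) (hn : 0 < n)
    (lam A : ℝ → ℝ)
    (hlam : ∀ t : ℝ, lam t = lam0 + ε * Real.cos (2 * Real.pi * (n : ℝ) * t / d))
    (hA : ∀ t : ℝ, A t = (1 + lam0 * d)⁻¹) :
    (∀ t : ℝ, 1 = (∫ s in (t - d)..t, lam s * A s) + A t) ∧
    (∀ t : ℝ, lam t * A t = lam t / (1 + lam0 * d)) := by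
  obtain rfl : A = fun _ => (1 + lam0 * d)⁻¹ := funext hA
  have hpos : 0 < 1 + lam0 * d := by nlinarith
  refine ⟨fun t => one_eq_integral_mul_const_add_const ?_ hpos.ne', fun _ => div_eq_mul_inv _ _⟩
  simp_rw [hlam]
  exact integral_const_add_mul_cos_eq hn.ne' hd.ne' lam0 ε t
end

section
/- Let Δ > 0, σ > 0, μ ∈ ℝ. Then for all x > 0, (1/x)·(1 + (ln(x/Δ) − μ)/σ²) ≤ Δ^{−1} σ^{−2} exp(−1 − μ + σ²), and this bound is attained at x = Δ e^{μ + 1 − σ²}; in particular, for any λ ≥ Δ^{−1} σ^{−2} exp(−1 − μ + σ²), one has 1 − (1/(xλ))·(1 + (ln(x/Δ) − μ)/σ²) ≥ 0 for all x > 0. -/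
/-!
Substituting `x = Δ eᵗ` turns `(1/x)(1 + (ln(x/Δ) - μ)/σ²)` into `Δ⁻¹σ⁻² (σ² - μ + t) e⁻ᵗ`, and
`(a + t) e⁻ᵗ ≤ e^{a-1}` is the tangent-line bound `u + 1 ≤ eᵘ` at `u = a + t - 1`, with equality
at `t = 1 - a`.
-/

open Real

lemma add_mul_exp_neg_le_exp_sub_one (a t : ℝ) : (a + t) * exp (-t) ≤ exp (a - 1) :=
  calc (a + t) * exp (-t) ≤ exp (a + t - 1) * exp (-t) := by
        gcongr; linarith [add_one_le_exp (a + t - 1)]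
    _ = exp (a - 1) := by rw [← exp_add]; ring_nf

lemma add_log_div_div_le {Δ x : ℝ} (a : ℝ) (hΔ : 0 < Δ) (hx : 0 < x) :
    (a + log (x / Δ)) / x ≤ Δ⁻¹ * exp (a - 1) := by
  obtain ⟨t, rfl⟩ : ∃ t, x = Δ * exp t :=
    ⟨log (x / Δ), by rw [exp_log (by positivity)]; field_simp⟩
  rw [mul_div_cancel_left₀ _ hΔ.ne', log_exp]
  calc (a + t) / (Δ * exp t) = Δ⁻¹ * ((a + t) * exp (-t)) := by rw [exp_neg]; field_simp
    _ ≤ Δ⁻¹ * exp (a - 1) := by gcongr; exact add_mul_exp_neg_le_exp_sub_one a t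

lemma add_log_div_div_eq_at_max {Δ : ℝ} (a : ℝ) (hΔ : 0 < Δ) :
    (a + log (Δ * exp (1 - a) / Δ)) / (Δ * exp (1 - a)) = Δ⁻¹ * exp (a - 1) := by
  rw [mul_div_cancel_left₀ _ hΔ.ne', log_exp, show a - 1 = -(1 - a) by ring, exp_neg]
  field_simp
  ring

lemma one_add_log_sub_div_eq {σ : ℝ} (hσ : σ ≠ 0) (μ L x : ℝ) :
    1 / x * (1 + (L - μ) / σ ^ 2) = (σ ^ 2)⁻¹ * ((σ ^ 2 - μ + L) / x) := by
  field_simp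
  ring

/-- for `Δ, σ > 0` and `μ ∈ ℝ`, the function
`x ↦ (1/x)(1 + (ln(x/Δ) - μ)/σ²)` is bounded above on `(0,∞)` by
`Δ⁻¹ σ⁻² exp(-1 - μ + σ²)`, the bound is attained at `x = Δ e^{μ+1-σ²}`, and for any
`lam` at least this bound, `1 - (1/(x·lam))(1 + (ln(x/Δ) - μ)/σ²) ≥ 0` for all `x > 0`. -/
theorem stmt_18 (Δ σ μ : ℝ) (hΔ : 0 < Δ) (hσ : 0 < σ) :
    (∀ x : ℝ, 0 < x →
      (1 / x) * (1 + (Real.log (x / Δ) - μ) / σ ^ 2) ≤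
        Δ⁻¹ * (σ ^ 2)⁻¹ * Real.exp (-1 - μ + σ ^ 2)) ∧
    ((1 / (Δ * Real.exp (μ + 1 - σ ^ 2))) *
        (1 + (Real.log (Δ * Real.exp (μ + 1 - σ ^ 2) / Δ) - μ) / σ ^ 2) =
      Δ⁻¹ * (σ ^ 2)⁻¹ * Real.exp (-1 - μ + σ ^ 2)) ∧
    (∀ lam : ℝ, Δ⁻¹ * (σ ^ 2)⁻¹ * Real.exp (-1 - μ + σ ^ 2) ≤ lam →
      ∀ x : ℝ, 0 < x →
        0 ≤ 1 - (1 / (x * lam)) * (1 + (Real.log (x / Δ) - μ) / σ ^ 2)) := by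
  have hexp : -1 - μ + σ ^ 2 = σ ^ 2 - μ - 1 := by ring
  have bound : ∀ x : ℝ, 0 < x → (1 / x) * (1 + (log (x / Δ) - μ) / σ ^ 2) ≤
      Δ⁻¹ * (σ ^ 2)⁻¹ * exp (-1 - μ + σ ^ 2) := by
    intro x hx
    rw [one_add_log_sub_div_eq hσ.ne', hexp, mul_comm Δ⁻¹, mul_assoc]
    gcongr
    exact add_log_div_div_le _ hΔ hx
  refine ⟨bound, ?_, fun lam hlam x hx => ?_⟩
  · rw [one_add_log_sub_div_eq hσ.ne', show μ + 1 - σ ^ 2 = 1 - (σ ^ 2 - μ) by ring,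
      add_log_div_div_eq_at_max _ hΔ, hexp]
    ring
  · have hlam_pos : 0 < lam := lt_of_lt_of_le (by positivity) hlam
    have hfactor : 1 / (x * lam) * (1 + (log (x / Δ) - μ) / σ ^ 2) =
        (1 / x * (1 + (log (x / Δ) - μ) / σ ^ 2)) / lam := by ring
    rw [hfactor, sub_nonneg, div_le_one hlam_pos]
    exact (bound x hx).trans hlam
end
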